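/- arXiv:1802.02982 — 2 statements merged into one kernel-verified Lean document; each statement's English description precedes it below -/
import Mathlib

section
/- Let G be a simple 3-regular graph with girth at least 5 and let xy be an edge of G with κ_{1/4}(x,y) = 0 (equivalently W_1(μ_x^{1/4}, μ_y^{1/4}) = 1). Then the edge xy lies on a 5-cycle, and moreover there exist two 5-cycles P_1 and P_2 through the edge xy whose vertex sets intersect exactly in {x, y}. -/
open scoped ENNReal

namespace RicciFlatCubic

variable {V : Type*}

/-- The probability measure `μ_x^p` on the vertex set: mass `p` at `x`,
mass `(1-p)/deg x` at each neighbor of `x`, and `0` elsewhere. -/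
noncomputable def muMeasure (G : SimpleGraph V) [G.LocallyFinite] (p : ℝ≥0∞) (x : V) :
    V → ℝ≥0∞ := fun z =>
  haveI : DecidableEq V := Classical.decEq V
  haveI : Decidable (G.Adj x z) := Classical.dec _
  if z = x then p
  else if G.Adj x z then (1 - p) / (G.degree x : ℝ≥0∞)
  else 0

/-- `π : V × V → [0,1]` is a transport plan from `μ₁` to `μ₂` if its marginals are `μ₁`, `μ₂`. -/
def IsTransportPlan (μ₁ μ₂ : V → ℝ≥0∞) (π : V → V → ℝ≥0∞) : Prop :=
  (∀ u v, π u v ≤ 1) ∧ (∀ u, ∑' v, π u v = μ₁ u) ∧ (∀ v, ∑' u, π u v = μ₂ v)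

/-- The Wasserstein distance `W₁(μ₁, μ₂)`: the infimum over all transport plans of the
transport cost `∑ d(u,v) π(u,v)`, where `d` is the shortest-path distance in `G`. -/
noncomputable def W1 (G : SimpleGraph V) (μ₁ μ₂ : V → ℝ≥0∞) : ℝ≥0∞ :=
  ⨅ π : {π : V → V → ℝ≥0∞ // IsTransportPlan μ₁ μ₂ π},
    ∑' q : V × V, (G.dist q.1 q.2 : ℝ≥0∞) * π.1 q.1 q.2

/-- The `p`-Ollivier-Ricci curvature `κ_p(x,y) = 1 - W₁(μ_x^p, μ_y^p)` (as a real number),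
for a real idleness parameter `p`. -/
noncomputable def kappa (G : SimpleGraph V) [G.LocallyFinite] (p : ℝ) (x y : V) : ℝ :=
  1 - (W1 G (muMeasure G (ENNReal.ofReal p) x) (muMeasure G (ENNReal.ofReal p) y)).toReal

/-- The edge `xy` lies on two 5-cycles whose vertex sets intersect exactly in `{x, y}`. -/
def TwoPentagons (G : SimpleGraph V) (x y : V) : Prop :=
  ∃ P₁ P₂ : G.Walk x x, P₁.IsCycle ∧ P₂.IsCycle ∧ P₁.length = 5 ∧ P₂.length = 5 ∧
    s(x, y) ∈ P₁.edges ∧ s(x, y) ∈ P₂.edges ∧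
    {v | v ∈ P₁.support} ∩ {v | v ∈ P₂.support} = {x, y}

/-- The Petersen graph as the Kneser graph `K(5,2)`. -/
def petersen : SimpleGraph {s : Finset (Fin 5) // s.card = 2} where
  Adj a b := Disjoint a.1 b.1
  symm := ⟨fun _ _ h => h.symm⟩
  loopless := ⟨by
    rintro ⟨s, hs⟩ (h : Disjoint s s)
    rw [disjoint_self] at h
    simp only [Finset.bot_eq_empty] at h
    simp [h] at hs⟩

/-- The Triplex: a 12-cycle on `ℤ/12ℤ` together with six chords. -/
def triplex : SimpleGraph (ZMod 12) :=
  SimpleGraph.fromRel fun i j =>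
    j = i + 1 ∨ (i = 1 ∧ j = 7) ∨ (i = 2 ∧ j = 10) ∨ (i = 3 ∧ j = 8) ∨
      (i = 4 ∧ j = 12) ∨ (i = 5 ∧ j = 9) ∨ (i = 6 ∧ j = 11)

/-- The dodecahedral graph: layer `0` is the outer 5-cycle `a`, layers `1`, `2` form the
middle 10-cycle `b₁ c₁ b₂ c₂ … b₅ c₅`, layer `3` is the inner 5-cycle `d`. -/
def dodecahedral : SimpleGraph (Fin 4 × ZMod 5) :=
  SimpleGraph.fromRel fun p q =>
    (p.1 = 0 ∧ q.1 = 0 ∧ q.2 = p.2 + 1) ∨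
    (p.1 = 0 ∧ q.1 = 1 ∧ q.2 = p.2) ∨
    (p.1 = 1 ∧ q.1 = 2 ∧ q.2 = p.2) ∨
    (p.1 = 2 ∧ q.1 = 1 ∧ q.2 = p.2 + 1) ∨
    (p.1 = 2 ∧ q.1 = 3 ∧ q.2 = p.2) ∨
    (p.1 = 3 ∧ q.1 = 3 ∧ q.2 = p.2 + 1)

/-- The half-dodecahedral graph: inner 5-cycle `y` (`Sum.inl`), outer 10-cycle `x`
(`Sum.inr`), and spokes `yᵢ ~ x_{2i-1}`. -/
def halfDodecahedral : SimpleGraph (ZMod 5 ⊕ ZMod 10) :=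
  SimpleGraph.fromRel fun p q =>
    (∃ i : ZMod 5, p = Sum.inl i ∧ q = Sum.inl (i + 1)) ∨
    (∃ j : ZMod 10, p = Sum.inr j ∧ q = Sum.inr (j + 1)) ∨
    (∃ i : ZMod 5, p = Sum.inl i ∧ q = Sum.inr (2 * (i.val : ZMod 10) - 1))

/-- The two-sided infinite path on `ℤ`. -/
def infinitePath : SimpleGraph ℤ := SimpleGraph.fromRel fun i j => j = i + 1

/-- The cycle `Cₙ` on `ℤ/nℤ`. -/
def cycleZMod (n : ℕ) : SimpleGraph (ZMod n) := SimpleGraph.fromRel fun i j => j = i + 1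

noncomputable instance (v : {s : Finset (Fin 5) // s.card = 2}) :
    Fintype (petersen.neighborSet v) := (Set.toFinite _).fintype

noncomputable instance (v : ZMod 12) : Fintype (triplex.neighborSet v) :=
  (Set.toFinite _).fintype

noncomputable instance (v : Fin 4 × ZMod 5) : Fintype (dodecahedral.neighborSet v) :=
  (Set.toFinite _).fintype

/-! Write `N(x) = {y, x₁, x₂}` and `N(y) = {x, y₁, y₂}`; both measures put mass `1/4` on each
vertex of the closed neighbourhood. If some `yⱼ` were at distance at least `3` from both `x₁` and
`x₂`, the `1`-Lipschitz potential `v ↦ min (d(x₁, v), d(x₂, v))` would certify `W₁ ≥ 5/4` by weak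
duality; as `W₁` is symmetric, the same holds with the roles of `x` and `y` exchanged. Hence in the
relation "at distance `2`" between `{x₁, x₂}` and `{y₁, y₂}` every vertex has a partner, so it
contains a perfect matching. Each matched pair `xᵢ w yⱼ` closes a pentagon `x xᵢ w yⱼ y`, and girth
at least `5` forces the two pentagons to meet only in `x` and `y`. -/

open SimpleGraph

section Wasserstein

variable (G : SimpleGraph V)

theorem W1_comm (μ₁ μ₂ : V → ℝ≥0∞) : W1 G μ₁ μ₂ = W1 G μ₂ μ₁ := by
  suffices h : ∀ μ₁ μ₂ : V → ℝ≥0∞, W1 G μ₂ μ₁ ≤ W1 G μ₁ μ₂ from le_antisymm (h _ _) (h _ _)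
  intro μ₁ μ₂
  refine le_iInf fun ⟨π, hle, h₁, h₂⟩ =>
    iInf_le_of_le ⟨fun u v => π v u, fun u v => hle v u, h₂, h₁⟩ ?_
  rw [← (Equiv.prodComm V V).tsum_eq]
  simp [dist_comm]

/-- Weak Kantorovich duality, in a form that needs no subtraction: `φ` is `1`-Lipschitz from the
support of `μ₁` to that of `μ₂`. -/
theorem tsum_mul_le_W1_add {μ₁ μ₂ φ : V → ℝ≥0∞}
    (hφ : ∀ u v, μ₁ u ≠ 0 → μ₂ v ≠ 0 → φ v ≤ G.dist u v + φ u) :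
    ∑' v, φ v * μ₂ v ≤ W1 G μ₁ μ₂ + ∑' u, φ u * μ₁ u := by
  rw [W1, ENNReal.iInf_add]
  refine le_iInf fun ⟨π, _, h₁, h₂⟩ => ?_
  have hπ : ∀ u v, φ v * π u v ≤ (G.dist u v + φ u) * π u v := by
    intro u v
    by_cases hπ : π u v = 0
    · simp [hπ]
    refine mul_le_mul_left (hφ u v ?_ ?_) _
    · exact fun h => hπ (ENNReal.tsum_eq_zero.mp ((h₁ u).trans h) v)
    · exact fun h => hπ (ENNReal.tsum_eq_zero.mp ((h₂ v).trans h) u)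
  calc ∑' v, φ v * μ₂ v = ∑' q : V × V, φ q.2 * π q.1 q.2 := by
        rw [ENNReal.tsum_prod', ENNReal.tsum_comm]
        exact tsum_congr fun v => by rw [← h₂ v]; exact ENNReal.tsum_mul_left.symm
    _ ≤ ∑' q : V × V, (G.dist q.1 q.2 + φ q.1) * π q.1 q.2 := ENNReal.tsum_le_tsum fun q => hπ _ _
    _ = ∑' q : V × V, (G.dist q.1 q.2 : ℝ≥0∞) * π q.1 q.2 + ∑' u, φ u * μ₁ u := by
        simp_rw [add_mul, ENNReal.tsum_add]
        rw [ENNReal.tsum_prod' (f := fun q : V × V => φ q.1 * π q.1 q.2)]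
        exact congrArg _ (tsum_congr fun u => by rw [← h₁ u, ← ENNReal.tsum_mul_left])

end Wasserstein

section Measure

variable {G : SimpleGraph V} [G.LocallyFinite]

theorem reachable_of_muMeasure_ne_zero {p : ℝ≥0∞} {x u : V} (h : muMeasure G p x u ≠ 0) :
    G.Reachable x u := by
  unfold muMeasure at h
  split_ifs at h with hux hxu
  exacts [hux ▸ .rfl, hxu.reachable, absurd rfl h]

theorem tsum_mul_muMeasure_quarter [DecidableEq V] {x : V} (hx : G.degree x = 3)
    (F : V → ℝ≥0∞) :
    ∑' u, F u * muMeasure G (1/4) x u = (∑ u ∈ insert x (G.neighborFinset x), F u) / 4 := by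
  have hquarter : ((1 : ℝ≥0∞) - 1/4) / 3 = 1/4 := by
    rw [← ENNReal.toReal_eq_toReal_iff' (by simp [ENNReal.div_eq_top]) (by simp),
      ENNReal.toReal_div, ENNReal.toReal_sub_of_le (by norm_num) (by norm_num)]
    norm_num
  have hμ : ∀ u, muMeasure G (1/4) x u =
      if u ∈ insert x (G.neighborFinset x) then 1/4 else 0 := by
    intro u
    simp only [muMeasure, Finset.mem_insert, mem_neighborFinset, hx, Nat.cast_ofNat,
      hquarter]
    split_ifs <;> simp_all
  rw [tsum_eq_sum (s := insert x (G.neighborFinset x)) fun u hu => by rw [hμ, if_neg hu, mul_zero],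
    ENNReal.div_eq_inv_mul (a := ∑ u ∈ _, F u), Finset.mul_sum]
  exact Finset.sum_congr rfl fun u hu => by rw [hμ, if_pos hu, one_div, mul_comm]

end Measure

section Girth

variable {G : SimpleGraph V} {a b c d : V}

theorem not_adj_of_adj_of_adj (hG : 4 ≤ G.egirth) (hab : G.Adj a b) (hbc : G.Adj b c) :
    ¬G.Adj c a := fun hca => by
  have hcycle : (Walk.cons hab (.cons hbc (.cons hca .nil))).IsCycle := by
    simp [Walk.isCycle_def, hab.ne, hbc.ne, hca.ne, hab.ne', hca.ne']
  have := le_egirth.mp hG a _ hcycle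
  norm_num at this

theorem not_adj_of_adj_of_adj_of_adj (hG : 5 ≤ G.egirth) (hab : G.Adj a b) (hbc : G.Adj b c)
    (hcd : G.Adj c d) (hac : a ≠ c) (hbd : b ≠ d) : ¬G.Adj d a := fun hda => by
  have hcycle : (Walk.cons hab (.cons hbc (.cons hcd (.cons hda .nil)))).IsCycle := by
    simp [Walk.isCycle_def, hab.ne, hbc.ne, hcd.ne, hda.ne, hab.ne', hda.ne', hac, hbd, hac.symm]
  have := le_egirth.mp hG a _ hcycle
  norm_num at this

theorem one_lt_dist_of_adj_of_adj (hG : 4 ≤ G.egirth) (hab : G.Adj a b) (hbc : G.Adj b c)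
    (hac : a ≠ c) : 1 < G.dist a c :=
  (hab.reachable.trans hbc.reachable).one_lt_dist_of_ne_of_not_adj hac
    fun hac' => not_adj_of_adj_of_adj hG hab hbc hac'.symm

theorem one_lt_dist_of_adj_of_adj_of_adj (hG : 5 ≤ G.egirth) (hab : G.Adj a b)
    (hbc : G.Adj b c) (hcd : G.Adj c d) (hac : a ≠ c) (hbd : b ≠ d) : 1 < G.dist a d := by
  refine (hab.reachable.trans (hbc.reachable.trans hcd.reachable)).one_lt_dist_of_ne_of_not_adj
    ?_ fun hda => not_adj_of_adj_of_adj_of_adj hG hab hbc hcd hac hbd hda.symm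
  rintro rfl
  exact not_adj_of_adj_of_adj (le_trans (by norm_num) hG) hbc hcd hab

theorem exists_isCycle_length_five {e : V} (hab : G.Adj a b) (hbc : G.Adj b c) (hcd : G.Adj c d)
    (hde : G.Adj d e) (hea : G.Adj e a) (hac : a ≠ c) (had : a ≠ d) (hbd : b ≠ d) (hbe : b ≠ e)
    (hce : c ≠ e) : ∃ P : G.Walk a a, P.IsCycle ∧ P.length = 5 ∧ s(a, e) ∈ P.edges ∧
      P.support = [a, b, c, d, e, a] := by
  refine ⟨.cons hab (.cons hbc (.cons hcd (.cons hde (.cons hea .nil)))), ?_, rfl, ?_, rfl⟩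
  · simp [Walk.isCycle_def, hab.ne, hbc.ne, hcd.ne, hde.ne, hea.ne, hab.ne', hea.ne', hac, had,
      hbd, hbe, hce, hac.symm, had.symm]
  · simp [Sym2.eq_swap]

theorem exists_adj_adj_of_dist_eq_two (h : G.dist a c = 2) : ∃ b, G.Adj a b ∧ G.Adj b c := by
  obtain ⟨-, -, b, hb⟩ := edist_eq_two_iff.mp ((ENat.toNat_eq_iff two_ne_zero).mp h)
  exact ⟨b, hb.1, hb.2.symm⟩

end Girth

section Neighbors

variable {G : SimpleGraph V} [G.LocallyFinite] [DecidableEq V] {x y a b : V}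

theorem exists_neighborFinset_eq (hx : G.degree x = 3) (hxy : G.Adj x y) :
    ∃ a b, G.neighborFinset x = {y, a, b} := by
  have hy : y ∈ G.neighborFinset x := (G.mem_neighborFinset x y).mpr hxy
  obtain ⟨a, b, -, hab⟩ := Finset.card_eq_two.mp <| by
    rw [Finset.card_erase_of_mem hy, card_neighborFinset_eq_degree, hx]
  exact ⟨a, b, by rw [← Finset.insert_erase hy, hab]⟩

theorem adj_of_neighborFinset_eq (hN : G.neighborFinset x = {y, a, b}) :
    G.Adj x y ∧ G.Adj x a ∧ G.Adj x b := by
  simp [← mem_neighborFinset, hN]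

theorem ne_of_neighborFinset_eq (hx : G.degree x = 3) (hN : G.neighborFinset x = {y, a, b}) :
    y ≠ a ∧ y ≠ b ∧ a ≠ b := by
  rw [← card_neighborFinset_eq_degree, hN] at hx
  refine ⟨?_, ?_, ?_⟩ <;> rintro rfl <;> simp at hx <;>
    exact hx.not_lt (Finset.card_le_two.trans_lt (by norm_num))

end Neighbors

section Flat

variable {G : SimpleGraph V} [G.LocallyFinite] [DecidableEq V] {x y x₁ x₂ y₁ y₂ : V}

theorem dist_eq_two_of_W1_lt (hG : 5 ≤ G.egirth) (hx : G.degree x = 3) (hy : G.degree y = 3)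
    (hNx : G.neighborFinset x = {y, x₁, x₂}) (hNy : G.neighborFinset y = {x, y₁, y₂})
    (hW : W1 G (muMeasure G (1/4) x) (muMeasure G (1/4) y) < 5/4) :
    G.dist x₁ y₁ = 2 ∨ G.dist x₂ y₁ = 2 := by
  obtain ⟨hxy, hxx₁, hxx₂⟩ := adj_of_neighborFinset_eq hNx
  obtain ⟨-, hyy₁, hyy₂⟩ := adj_of_neighborFinset_eq hNy
  obtain ⟨hyx₁, hyx₂, hx₁₂⟩ := ne_of_neighborFinset_eq hx hNx
  obtain ⟨hxy₁, hxy₂, hy₁₂⟩ := ne_of_neighborFinset_eq hy hNy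
  have hbounds : ∀ a, G.Adj x a → y ≠ a → G.dist a x = 1 ∧ G.dist a y = 2 ∧
      1 < G.dist a y₁ ∧ 1 < G.dist a y₂ := by
    intro a ha hya
    refine ⟨dist_eq_one_iff_adj.mpr ha.symm, le_antisymm (dist_le (.cons ha.symm (.cons hxy .nil)))
      (one_lt_dist_of_adj_of_adj (le_trans (by norm_num) hG) ha.symm hxy hya.symm),
      one_lt_dist_of_adj_of_adj_of_adj hG ha.symm hxy hyy₁ hya.symm hxy₁,
      one_lt_dist_of_adj_of_adj_of_adj hG ha.symm hxy hyy₂ hya.symm hxy₂⟩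
  obtain ⟨h₁x, h₁y, h₁₁, h₁₂⟩ := hbounds x₁ hxx₁ hyx₁
  obtain ⟨h₂x, h₂y, h₂₁, h₂₂⟩ := hbounds x₂ hxx₂ hyx₂
  by_contra! hfar
  -- The distance to `{x₁, x₂}` sums to at least `8` over `N[y]` but only to `3` over `N[x]`.
  set φ : V → ℕ := fun v => min (G.dist x₁ v) (G.dist x₂ v) with hφ
  have hlip : ∀ u v, muMeasure G (1/4) x u ≠ 0 → muMeasure G (1/4) y v ≠ 0 →
      (φ v : ℝ≥0∞) ≤ G.dist u v + φ u := by
    intro u v hu hv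
    have huv : G.Reachable u v := ((reachable_of_muMeasure_ne_zero hu).symm.trans
      hxy.reachable).trans (reachable_of_muMeasure_ne_zero hv)
    have := huv.dist_triangle_right x₁
    have := huv.dist_triangle_right x₂
    exact_mod_cast (show min (G.dist x₁ v) (G.dist x₂ v) ≤
      G.dist u v + min (G.dist x₁ u) (G.dist x₂ u) by omega)
  have key := tsum_mul_le_W1_add G hlip
  rw [tsum_mul_muMeasure_quarter hx, tsum_mul_muMeasure_quarter hy, ← Nat.cast_sum,
    ← Nat.cast_sum] at key
  have hsum_y : 8 ≤ ∑ v ∈ insert y (G.neighborFinset y), φ v := by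
    rw [hNy, Finset.sum_insert (by simp [hxy.ne', hyy₁.ne, hyy₂.ne]),
      Finset.sum_insert (by simp [hxy₁, hxy₂]), Finset.sum_pair hy₁₂]
    simp only [hφ]
    omega
  have hsum_x : ∑ u ∈ insert x (G.neighborFinset x), φ u = 3 := by
    rw [hNx, Finset.sum_insert (by simp [hxy.ne, hxx₁.ne, hxx₂.ne]),
      Finset.sum_insert (by simp [hyx₁, hyx₂]), Finset.sum_pair hx₁₂]
    simp only [hφ, SimpleGraph.dist_self]
    omega
  have : (8 : ℝ≥0∞) / 4 ≤ W1 G (muMeasure G (1/4) x) (muMeasure G (1/4) y) + 3 / 4 := by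
    calc (8 : ℝ≥0∞) / 4 ≤ (∑ v ∈ insert y (G.neighborFinset y), φ v : ℕ) / 4 := by
          gcongr; exact_mod_cast hsum_y
      _ ≤ _ := by rwa [hsum_x] at key
  rw [show (8 : ℝ≥0∞) / 4 = 5 / 4 + 3 / 4 by rw [ENNReal.div_add_div_same]; norm_num,
    ENNReal.add_le_add_iff_right (by simp [ENNReal.div_eq_top])] at this
  exact hW.not_ge this

theorem twoPentagons_of_dist_eq_two (hG : 5 ≤ G.egirth) (hx : G.degree x = 3)
    (hy : G.degree y = 3) (hNx : G.neighborFinset x = {y, x₁, x₂})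
    (hNy : G.neighborFinset y = {x, y₁, y₂}) (h₁ : G.dist x₁ y₁ = 2) (h₂ : G.dist x₂ y₂ = 2) :
    TwoPentagons G x y := by
  obtain ⟨hxy, hxx₁, hxx₂⟩ := adj_of_neighborFinset_eq hNx
  obtain ⟨-, hyy₁, hyy₂⟩ := adj_of_neighborFinset_eq hNy
  obtain ⟨hyx₁, hyx₂, hx₁₂⟩ := ne_of_neighborFinset_eq hx hNx
  obtain ⟨hxy₁, hxy₂, hy₁₂⟩ := ne_of_neighborFinset_eq hy hNy
  have hG4 : 4 ≤ G.egirth := le_trans (by norm_num) hG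
  obtain ⟨w₁, hx₁w₁, hw₁y₁⟩ := exists_adj_adj_of_dist_eq_two h₁
  obtain ⟨w₂, hx₂w₂, hw₂y₂⟩ := exists_adj_adj_of_dist_eq_two h₂
  have hx₁y₂ := one_lt_dist_of_adj_of_adj_of_adj hG hxx₁.symm hxy hyy₂ hyx₁.symm hxy₂
  have hx₂y₁ := one_lt_dist_of_adj_of_adj_of_adj hG hxx₂.symm hxy hyy₁ hyx₂.symm hxy₁
  have hxw₁ : x ≠ w₁ := by rintro rfl; exact not_adj_of_adj_of_adj hG4 hxy hyy₁ hw₁y₁.symm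
  have hxw₂ : x ≠ w₂ := by rintro rfl; exact not_adj_of_adj_of_adj hG4 hxy hyy₂ hw₂y₂.symm
  have hw₁y : w₁ ≠ y := by rintro rfl; exact not_adj_of_adj_of_adj hG4 hxx₁ hx₁w₁ hxy.symm
  have hw₂y : w₂ ≠ y := by rintro rfl; exact not_adj_of_adj_of_adj hG4 hxx₂ hx₂w₂ hxy.symm
  obtain ⟨P₁, hP₁, hP₁5, hP₁xy, hP₁s⟩ := exists_isCycle_length_five hxx₁ hx₁w₁ hw₁y₁ hyy₁.symm
    hxy.symm hxw₁ hxy₁ (by rintro rfl; simp at h₁) hyx₁.symm hw₁y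
  obtain ⟨P₂, hP₂, hP₂5, hP₂xy, hP₂s⟩ := exists_isCycle_length_five hxx₂ hx₂w₂ hw₂y₂ hyy₂.symm
    hxy.symm hxw₂ hxy₂ (by rintro rfl; simp at h₂) hyx₂.symm hw₂y
  have hx₁w₂ : x₁ ≠ w₂ := by rintro rfl; exact not_adj_of_adj_of_adj hG4 hxx₂ hx₂w₂ hxx₁.symm
  have hw₁x₂ : w₁ ≠ x₂ := by rintro rfl; exact not_adj_of_adj_of_adj hG4 hxx₁ hx₁w₁ hxx₂.symm
  have hw₁w₂ : w₁ ≠ w₂ := by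
    rintro rfl; exact not_adj_of_adj_of_adj_of_adj hG hxx₁ hx₁w₁ hx₂w₂.symm hxw₁ hx₁₂ hxx₂.symm
  have hw₁y₂ : w₁ ≠ y₂ := by rintro rfl; exact hx₁y₂.ne' (dist_eq_one_iff_adj.mpr hx₁w₁)
  have hy₁w₂ : y₁ ≠ w₂ := by rintro rfl; exact hx₂y₁.ne' (dist_eq_one_iff_adj.mpr hx₂w₂)
  have hx₁y₂' : x₁ ≠ y₂ := by rintro rfl; simp at hx₁y₂
  have hx₂y₁' : x₂ ≠ y₁ := by rintro rfl; simp at hx₂y₁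
  refine ⟨P₁, P₂, hP₁, hP₂, hP₁5, hP₂5, hP₁xy, hP₂xy, ?_⟩
  ext v
  simp only [hP₁s, hP₂s, Set.mem_inter_iff, Set.mem_ofPred_eq, List.mem_cons, List.not_mem_nil,
    or_false, Set.mem_insert_iff, Set.mem_singleton_iff]
  grind

end Flat

theorem edge_lies_on_two_pentagons {V : Type*} (G : SimpleGraph V) [G.LocallyFinite]
    (hreg : G.IsRegularOfDegree 3) (hgirth : 5 ≤ G.egirth) (x y : V) (hxy : G.Adj x y)
    (hflat : W1 G (muMeasure G (1/4) x) (muMeasure G (1/4) y) = 1) :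
    (∃ P : G.Walk x x, P.IsCycle ∧ P.length = 5 ∧ s(x, y) ∈ P.edges) ∧
      TwoPentagons G x y := by
  classical
  obtain ⟨x₁, x₂, hNx⟩ := exists_neighborFinset_eq (hreg x) hxy
  obtain ⟨y₁, y₂, hNy⟩ := exists_neighborFinset_eq (hreg y) hxy.symm
  have hNx' : G.neighborFinset x = {y, x₂, x₁} := by rw [hNx, Finset.pair_comm]
  have hNy' : G.neighborFinset y = {x, y₂, y₁} := by rw [hNy, Finset.pair_comm]
  have hW : W1 G (muMeasure G (1/4) x) (muMeasure G (1/4) y) < 5/4 := by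
    rw [hflat, ENNReal.lt_div_iff_mul_lt (by norm_num) (by norm_num)]; norm_num
  have hW' : W1 G (muMeasure G (1/4) y) (muMeasure G (1/4) x) < 5/4 := W1_comm G _ _ ▸ hW
  have h₁ := dist_eq_two_of_W1_lt hgirth (hreg x) (hreg y) hNx hNy hW
  have h₂ := dist_eq_two_of_W1_lt hgirth (hreg x) (hreg y) hNx hNy' hW
  have h₃ := dist_eq_two_of_W1_lt hgirth (hreg y) (hreg x) hNy hNx hW'
  have h₄ := dist_eq_two_of_W1_lt hgirth (hreg y) (hreg x) hNy hNx' hW'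
  simp only [dist_comm (u := y₁), dist_comm (u := y₂)] at h₃ h₄
  have hP : TwoPentagons G x y := by
    obtain ⟨h, h'⟩ | ⟨h, h'⟩ : G.dist x₁ y₁ = 2 ∧ G.dist x₂ y₂ = 2 ∨
        G.dist x₁ y₂ = 2 ∧ G.dist x₂ y₁ = 2 := by tauto
    exacts [twoPentagons_of_dist_eq_two hgirth (hreg x) (hreg y) hNx hNy h h',
      twoPentagons_of_dist_eq_two hgirth (hreg x) (hreg y) hNx hNy' h h']
  refine ⟨?_, hP⟩
  obtain ⟨P, -, hPc, -, hP5, -, hPxy, -⟩ := hP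
  exact ⟨P, hPc, hP5, hPxy⟩

end RicciFlatCubic
end

section
/- The Petersen graph is 3-regular with girth 5, and every edge xy of the Petersen graph lies on two 5-cycles whose vertex sets intersect exactly in {x, y}. -/
open scoped ENNReal

namespace RicciFlatCubic

variable {V : Type*}

/-!
A 2-subset of `Fin 5` is disjoint from exactly the three 2-subsets of its complement. Three
pairwise disjoint 2-subsets would need six points, so there are no triangles; two distinct
2-subsets cover at least three points, so at most one 2-subset avoids both, and there are no
4-cycles either. Every permutation of `Fin 5` is an automorphism, and these act transitively on
ordered edges, so it suffices to exhibit two pentagons through the single edge `{0, 1} ~ {2, 3}`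
meeting only in its endpoints.
-/

open SimpleGraph Finset

theorem TwoPentagons.map {W : Type*} {G : SimpleGraph V} {H : SimpleGraph W} (f : G ≃g H)
    {x y : V} (h : TwoPentagons G x y) : TwoPentagons H (f x) (f y) := by
  obtain ⟨P₁, P₂, hP₁, hP₂, hl₁, hl₂, he₁, he₂, hsupp⟩ := h
  have hsupport (P : G.Walk x x) :
      {v | v ∈ (P.map f.toHom).support} = f '' {v | v ∈ P.support} := by
    ext; simp [Walk.support_map]
  refine ⟨P₁.map f.toHom, P₂.map f.toHom, hP₁.map f.injective, hP₂.map f.injective,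
    by simpa using hl₁, by simpa using hl₂, ?_, ?_, ?_⟩
  · simpa [Walk.edges_map] using List.mem_map_of_mem (f := Sym2.map f) he₁
  · simpa [Walk.edges_map] using List.mem_map_of_mem (f := Sym2.map f) he₂
  · rw [hsupport, hsupport, ← Set.image_inter f.injective, hsupp, Set.image_pair]

theorem five_le_egirth {G : SimpleGraph V} (h3 : G.CliqueFree 3)
    (hC4 : ∀ a c, a ≠ c → (G.commonNeighbors a c).Subsingleton) : 5 ≤ G.egirth := by
  refine le_egirth.mpr fun u w hw => ?_
  have hne3 : w.length ≠ 3 := fun hlen =>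
    have ⟨s, hs⟩ := is3Clique_iff_exists_cycle_length_three.mpr ⟨u, w, hw, hlen⟩
    h3 s hs
  have hne4 : w.length ≠ 4 := by
    intro hlen
    rcases w with _ | ⟨hab, _ | ⟨hbc, _ | ⟨hcd, _ | ⟨hda, _ | ⟨_, _⟩⟩⟩⟩⟩ <;> simp at hlen
    have hnodup := hw.support_nodup
    simp only [Walk.support_cons, Walk.support_nil, List.tail_cons, List.nodup_cons,
      List.mem_cons, List.not_mem_nil, or_false, not_or, not_false_eq_true, List.nodup_nil,
      and_self, and_true] at hnodup
    exact hnodup.1.2.1 (hC4 u _ (Ne.symm hnodup.2.1.2) ⟨hab, hbc.symm⟩ ⟨hda.symm, hcd⟩)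
  have := hw.three_le_length
  exact_mod_cast (by omega : 5 ≤ w.length)

abbrev PetersenVertex := {s : Finset (Fin 5) // s.card = 2}

instance : DecidableRel petersen.Adj := fun a b => inferInstanceAs (Decidable (Disjoint a.1 b.1))

theorem petersen_isRegularOfDegree_three : petersen.IsRegularOfDegree 3 := by
  have hcard : ∀ v : PetersenVertex, #{w | petersen.Adj v w} = 3 := by decide
  intro v
  rw [← card_neighborFinset_eq_degree, ← hcard v]
  congr 1
  ext
  simp

theorem petersen_cliqueFree_three : petersen.CliqueFree 3 := by
  intro t ht
  obtain ⟨a, b, c, hab, hac, hbc, -⟩ := is3Clique_iff.mp ht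
  have hcard : #(a.1 ∪ b.1 ∪ c.1) = 6 := by
    rw [card_union_of_disjoint (disjoint_union_left.mpr ⟨hac, hbc⟩), card_union_of_disjoint hab,
      a.2, b.2, c.2]
  have := card_le_univ (a.1 ∪ b.1 ∪ c.1)
  simp only [hcard, Fintype.card_fin] at this
  omega

theorem petersen_eq_compl_union_of_adj {a b c : PetersenVertex} (hac : a ≠ c)
    (hab : petersen.Adj a b) (hcb : petersen.Adj c b) : b.1 = (a.1 ∪ c.1)ᶜ := by
  have hsub : b.1 ⊆ (a.1 ∪ c.1)ᶜ :=
    subset_compl_iff_disjoint_right.mpr (disjoint_union_left.mpr ⟨hab, hcb⟩).symm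
  have hssub : a.1 ⊂ a.1 ∪ c.1 := by
    refine Finset.ssubset_iff_subset_ne.mpr ⟨subset_union_left, fun h => hac (Subtype.ext ?_)⟩
    exact (eq_of_subset_of_card_le (h ▸ subset_union_right) (by rw [a.2, c.2])).symm
  have hlt := card_lt_card hssub
  refine eq_of_subset_of_card_le hsub ?_
  rw [card_compl, Fintype.card_fin, b.2, a.2] at *
  omega

theorem petersen_commonNeighbors_subsingleton {a c : PetersenVertex} (hac : a ≠ c) :
    (petersen.commonNeighbors a c).Subsingleton := fun _ hb _ hd =>
  Subtype.ext <| (petersen_eq_compl_union_of_adj hac hb.1 hb.2).trans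
    (petersen_eq_compl_union_of_adj hac hd.1 hd.2).symm

def petersenIsoOfPerm (σ : Equiv.Perm (Fin 5)) : petersen ≃g petersen where
  toEquiv := (Equiv.finsetCongr σ).subtypeEquiv fun s => by simp
  map_rel_iff' := by
    rintro ⟨s, hs⟩ ⟨t, ht⟩
    simp [petersen, Equiv.finsetCongr_apply]

theorem petersen_exists_iso_of_adj {x y : PetersenVertex} (h : petersen.Adj x y) :
    ∃ f : petersen ≃g petersen, f ⟨{0, 1}, rfl⟩ = x ∧ f ⟨{2, 3}, rfl⟩ = y := by
  obtain ⟨p, q, hpq, hx⟩ := card_eq_two.mp x.2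
  obtain ⟨r, s, hrs, hy⟩ := card_eq_two.mp y.2
  have hdisj : Disjoint ({p, q} : Finset (Fin 5)) {r, s} := hx ▸ hy ▸ h
  simp only [disjoint_insert_left, disjoint_singleton_left, mem_insert, mem_singleton,
    not_or] at hdisj
  obtain ⟨⟨hpr, hps⟩, hqr, hqs⟩ := hdisj
  have hinj : Function.Injective ![p, q, r, s] := by
    simp [Function.Injective, Fin.forall_fin_succ, hpq, hpr, hps, hqr, hqs, hrs, eq_comm]
  obtain ⟨σ, hσ⟩ := Equiv.Perm.exists_extending_pair ![0, 1, 2, 3] _ (by decide) hinj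
  obtain ⟨h0, h1, h2, h3⟩ : σ 0 = p ∧ σ 1 = q ∧ σ 2 = r ∧ σ 3 = s :=
    ⟨hσ 0, hσ 1, hσ 2, hσ 3⟩
  refine ⟨petersenIsoOfPerm σ, Subtype.ext ?_, Subtype.ext ?_⟩
  · simp [petersenIsoOfPerm, hx, h0, h1]
  · simp [petersenIsoOfPerm, hy, h2, h3]

def petersenPentagon₁ : petersen.Walk ⟨{0, 1}, rfl⟩ ⟨{0, 1}, rfl⟩ :=
  .cons (v := ⟨{2, 3}, rfl⟩) (by decide) <| .cons (v := ⟨{0, 4}, rfl⟩) (by decide) <|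
  .cons (v := ⟨{1, 2}, rfl⟩) (by decide) <| .cons (v := ⟨{3, 4}, rfl⟩) (by decide) <|
  .cons (by decide) .nil

def petersenPentagon₂ : petersen.Walk ⟨{0, 1}, rfl⟩ ⟨{0, 1}, rfl⟩ :=
  .cons (v := ⟨{2, 3}, rfl⟩) (by decide) <| .cons (v := ⟨{1, 4}, rfl⟩) (by decide) <|
  .cons (v := ⟨{0, 3}, rfl⟩) (by decide) <| .cons (v := ⟨{2, 4}, rfl⟩) (by decide) <|
  .cons (by decide) .nil

theorem petersenPentagon₁_isCycle : petersenPentagon₁.IsCycle :=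
  (Walk.isCycle_def _).mpr ⟨⟨by decide⟩, by simp [petersenPentagon₁], by decide⟩

theorem petersenPentagon₂_isCycle : petersenPentagon₂.IsCycle :=
  (Walk.isCycle_def _).mpr ⟨⟨by decide⟩, by simp [petersenPentagon₂], by decide⟩

theorem petersen_twoPentagons_zeroOne_twoThree :
    TwoPentagons petersen ⟨{0, 1}, rfl⟩ ⟨{2, 3}, rfl⟩ := by
  refine ⟨petersenPentagon₁, petersenPentagon₂, petersenPentagon₁_isCycle,
    petersenPentagon₂_isCycle, rfl, rfl, by decide, by decide, ?_⟩
  have hsupp : ∀ v, v ∈ petersenPentagon₁.support ∧ v ∈ petersenPentagon₂.support ↔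
      v = ⟨{0, 1}, rfl⟩ ∨ v = ⟨{2, 3}, rfl⟩ := by decide
  ext v
  simp [hsupp v]

theorem petersen_egirth : petersen.egirth = 5 :=
  le_antisymm (egirth_le_length petersenPentagon₁_isCycle)
    (five_le_egirth petersen_cliqueFree_three fun _ _ => petersen_commonNeighbors_subsingleton)

theorem petersen_twoPentagons :
    petersen.IsRegularOfDegree 3 ∧ petersen.egirth = 5 ∧
      ∀ x y, petersen.Adj x y → TwoPentagons petersen x y := by
  refine ⟨petersen_isRegularOfDegree_three, petersen_egirth, fun x y h => ?_⟩
  obtain ⟨f, rfl, rfl⟩ := petersen_exists_iso_of_adj h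
  exact petersen_twoPentagons_zeroOne_twoThree.map f

end RicciFlatCubic
end
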